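/- In the automaton A_1 of the previous construction, the maximum size of a synchronizing set consisting of states of the first layer {v^{(1)}_1, …, v^{(1)}_p} equals α(G), the independence number of G. -/

import Mathlib

def deltaStar {Q A : Type*} (δ : Q → A → Q) (q : Q) (w : List A) : Q :=
  w.foldl δ q

def IsSyncSet {Q A : Type*} (δ : Q → A → Q) (S : Set Q) : Prop :=
  ∃ (w : List A) (q : Q), ∀ s ∈ S, deltaStar δ s w = q

/-- States of the binary automaton A₁ built from a graph on p vertices:
layered states v i j (layer i, index j), absorbing states u i j, and a
p-state cycle c k whose state c 0 plays the role of f. -/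
inductive St1 (p : ℕ) : Type where
  | v : Fin p → Fin p → St1 p
  | u : Fin p → Fin p → St1 p
  | c : Fin p → St1 p
deriving DecidableEq

/-- Transitions of A₁ over the binary alphabet {0 = false, 1 = true}:
v i j goes to u i j on 0 iff i = j, and on 1 iff v_i v_j ∈ E; otherwise it
moves to the next layer (or to f = c 0 from the last layer); u-states have
self-loops; the c-states form a cycle on both letters. -/
def delta1 {p : ℕ} (G : SimpleGraph (Fin p)) [DecidableRel G.Adj] :
    St1 p → Bool → St1 p
  | St1.v i j, b =>
      if (b = false ∧ i = j) ∨ (b = true ∧ G.Adj i j) then St1.u i j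
      else if h : i.val + 1 < p then St1.v ⟨i.val + 1, h⟩ j else St1.c ⟨0, i.pos⟩
  | St1.u i j, _ => St1.u i j
  | St1.c k, _ => St1.c ⟨(k.val + 1) % p, Nat.mod_lt _ k.pos⟩

/-!
A first-layer state `v⁽¹⁾_j` reaches the cycle exactly when no letter absorbs it: the letter read
in layer `k` must be `1` at `k = j`, and may be `1` only if `v_k v_j ∉ E`. Until it reaches the
cycle, a run remembers the column `j` it started in, so two distinct first-layer states can only
be synchronized on the cycle. If `v_j v_{j'} ∈ E`, the letter read in layer `j'` absorbs
`v⁽¹⁾_{j'}` if it is `0` and `v⁽¹⁾_j` if it is `1`; hence synchronizing sets are independent.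
Conversely, the indicator word of an independent set `I` sends every `v⁽¹⁾_j` with `j ∈ I` to `f`.
-/

@[simp]
lemma deltaStar_nil {Q A : Type*} (δ : Q → A → Q) (q : Q) : deltaStar δ q [] = q := rfl

@[simp]
lemma deltaStar_cons {Q A : Type*} (δ : Q → A → Q) (q : Q) (a : A) (w : List A) :
    deltaStar δ q (a :: w) = deltaStar δ (δ q a) w := rfl

namespace St1

variable {p : ℕ} (G : SimpleGraph (Fin p))

def Absorbs (b : Bool) (i j : Fin p) : Prop :=
  (b = false ∧ i = j) ∨ (b = true ∧ G.Adj i j)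

/-- Started in layer `i`, the run reads the letter `w[k - i]` in layer `k`. -/
def NeverAbsorbs (w : List Bool) (i j : Fin p) : Prop :=
  ∀ k : Fin p, i ≤ k → ∀ b, w[(k : ℕ) - i]? = some b → ¬ Absorbs G b k j

lemma neverAbsorbs_cons {b : Bool} {w : List Bool} {i j : Fin p} :
    NeverAbsorbs G (b :: w) i j ↔
      ¬ Absorbs G b i j ∧ ∀ hi : (i : ℕ) + 1 < p, NeverAbsorbs G w ⟨i + 1, hi⟩ j := by
  constructor
  · intro h
    refine ⟨h i le_rfl b (by simp), fun hi k hk b' hb' => h k ?_ b' ?_⟩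
    · exact le_trans (Fin.mk_le_mk.mpr (Nat.le_succ _)) hk
    · rw [show (k : ℕ) - i = (k - (i + 1)) + 1 by have := Fin.le_def.mp hk; simp at this; omega]
      simpa using hb'
  · rintro ⟨hb, hw⟩ k hk b' hb'
    rcases (Fin.le_def.mp hk).eq_or_lt with hik | hik
    · obtain rfl : i = k := Fin.ext hik
      simp_all
    · refine hw (by omega) k (Fin.mk_le_of_le_val hik) b' ?_
      rwa [show (k : ℕ) - i = (k - (i + 1)) + 1 by omega, List.getElem?_cons_succ] at hb'

variable [DecidableRel G.Adj]

lemma delta1_v_of_absorbs {b : Bool} {i j : Fin p} (h : Absorbs G b i j) :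
    delta1 G (v i j) b = u i j :=
  if_pos h

lemma delta1_v_of_not_absorbs {b : Bool} {i j : Fin p} (h : ¬ Absorbs G b i j)
    (hi : (i : ℕ) + 1 < p) : delta1 G (v i j) b = v ⟨i + 1, hi⟩ j :=
  (if_neg h).trans (dif_pos hi)

lemma delta1_v_last_of_not_absorbs {b : Bool} {i j : Fin p} (h : ¬ Absorbs G b i j)
    (hi : ¬ (i : ℕ) + 1 < p) : delta1 G (v i j) b = c ⟨0, i.pos⟩ :=
  (if_neg h).trans (dif_neg hi)

@[simp]
lemma deltaStar_u (i j : Fin p) (w : List Bool) : deltaStar (delta1 G) (u i j) w = u i j := by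
  induction w with
  | nil => rfl
  | cons b w ih => exact ih

lemma neverAbsorbs_of_deltaStar_eq_c {w : List Bool} {i j m : Fin p}
    (h : deltaStar (delta1 G) (v i j) w = c m) :
    p ≤ i + w.length ∧ NeverAbsorbs G w i j := by
  induction w generalizing i with
  | nil => cases h
  | cons b w ih =>
    rw [deltaStar_cons] at h
    have hb : ¬ Absorbs G b i j := fun hb => by
      rw [delta1_v_of_absorbs G hb, deltaStar_u] at h
      cases h
    by_cases hi : (i : ℕ) + 1 < p
    · rw [delta1_v_of_not_absorbs G hb hi] at h
      obtain ⟨hlen, hw⟩ := ih h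
      refine ⟨by simp at hlen ⊢; omega, neverAbsorbs_cons G |>.mpr ⟨hb, fun _ => hw⟩⟩
    · exact ⟨by simp; omega, neverAbsorbs_cons G |>.mpr ⟨hb, fun hi' => absurd hi' hi⟩⟩

lemma deltaStar_v_eq_c_zero {w : List Bool} {i j : Fin p} (hlen : i + w.length = p)
    (h : NeverAbsorbs G w i j) : deltaStar (delta1 G) (v i j) w = c ⟨0, i.pos⟩ := by
  induction w generalizing i with
  | nil => simp at hlen; omega
  | cons b w ih =>
    obtain ⟨hb, hw⟩ := neverAbsorbs_cons G |>.mp h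
    rw [deltaStar_cons]
    by_cases hi : (i : ℕ) + 1 < p
    · rw [delta1_v_of_not_absorbs G hb hi]
      exact ih (by simp at hlen ⊢; omega) (hw hi)
    · obtain rfl : w = [] := List.eq_nil_of_length_eq_zero (by simp at hlen; omega)
      exact delta1_v_last_of_not_absorbs G hb hi

def column : St1 p → Option (Fin p)
  | v _ j => some j
  | u _ j => some j
  | c _ => none

lemma column_delta1 (q : St1 p) (b : Bool) :
    column (delta1 G q b) = column q ∨ column (delta1 G q b) = none := by
  cases q with
  | v i j =>
    simp only [delta1]
    split
    · exact Or.inl rfl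
    · split
      · exact Or.inl rfl
      · exact Or.inr rfl
  | u i j => exact Or.inl rfl
  | c k => exact Or.inr rfl

lemma column_deltaStar (q : St1 p) (w : List Bool) :
    column (deltaStar (delta1 G) q w) = column q ∨ column (deltaStar (delta1 G) q w) = none := by
  induction w generalizing q with
  | nil => exact Or.inl rfl
  | cons b w ih =>
    rcases ih (delta1 G q b) with h | h
    · rcases column_delta1 G q b with h' | h'
      · exact Or.inl (h.trans h')
      · exact Or.inr (h.trans h')
    · exact Or.inr h

lemma eq_c_of_deltaStar_v_eq_deltaStar_v {w : List Bool} {i j j' : Fin p} {q : St1 p}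
    (hjj' : j ≠ j') (h : deltaStar (delta1 G) (v i j) w = q)
    (h' : deltaStar (delta1 G) (v i j') w = q) : ∃ m, q = c m := by
  cases q with
  | c m => exact ⟨m, rfl⟩
  | v a b | u a b =>
    have := column_deltaStar G (v i j) w
    have := column_deltaStar G (v i j') w
    simp_all [column]

/-- Layers are indexed from `0`: `v ⟨0, hp⟩ j` is the paper's `v⁽¹⁾_j`. -/
lemma pairwise_not_adj_of_isSyncSet (hp : 0 < p) {J : Set (Fin p)}
    (hJ : IsSyncSet (delta1 G) (v ⟨0, hp⟩ '' J)) : J.Pairwise fun a b => ¬ G.Adj a b := by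
  obtain ⟨w, q, hq⟩ := hJ
  intro j hj j' hj' hjj' hadj
  have hrun := hq _ ⟨j, hj, rfl⟩
  have hrun' := hq _ ⟨j', hj', rfl⟩
  obtain ⟨m, rfl⟩ := eq_c_of_deltaStar_v_eq_deltaStar_v G hjj' hrun hrun'
  obtain ⟨hlen, hw⟩ := neverAbsorbs_of_deltaStar_eq_c G hrun
  obtain ⟨-, hw'⟩ := neverAbsorbs_of_deltaStar_eq_c G hrun'
  have hread : w[(j' : ℕ) - (⟨0, hp⟩ : Fin p)]? = some w[(j' : ℕ)] := by
    simp only [Nat.sub_zero]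
    exact List.getElem?_eq_getElem (by simp at hlen; omega)
  cases hb : w[(j' : ℕ)]'(by simp at hlen; omega) <;> rw [hb] at hread
  · exact hw' j' (Fin.mk_le_of_le_val (Nat.zero_le _)) false hread (Or.inl ⟨rfl, rfl⟩)
  · exact hw j' (Fin.mk_le_of_le_val (Nat.zero_le _)) true hread (Or.inr ⟨rfl, hadj.symm⟩)

open Classical in
lemma isSyncSet_image_of_pairwise (hp : 0 < p) {I : Set (Fin p)}
    (hI : I.Pairwise fun a b => ¬ G.Adj a b) : IsSyncSet (delta1 G) (v ⟨0, hp⟩ '' I) := by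
  refine ⟨List.ofFn fun k => decide (k ∈ I), c ⟨0, hp⟩, ?_⟩
  rintro _ ⟨j, hj, rfl⟩
  refine deltaStar_v_eq_c_zero G (by simp) fun k _ b hb => ?_
  obtain rfl : decide (k ∈ I) = b := by simpa using hb
  rintro (⟨hk, rfl⟩ | ⟨hk, hadj⟩)
  · simp [hj] at hk
  · exact hI (of_decide_eq_true hk) hj (G.ne_of_adj hadj) hadj

end St1

theorem stmt_13_general {p : ℕ} (G : SimpleGraph (Fin p)) [DecidableRel G.Adj]
    (hp : 0 < p) (α : ℕ)
    (hα : IsGreatest {k | ∃ I : Finset (Fin p),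
      (I : Set (Fin p)).Pairwise (fun a b => ¬ G.Adj a b) ∧ I.card = k} α) :
    IsGreatest {k | ∃ S : Set (St1 p),
      S ⊆ {q | ∃ j : Fin p, q = St1.v ⟨0, hp⟩ j} ∧
      IsSyncSet (delta1 G) S ∧ S.ncard = k} α := by
  have hinj : Function.Injective (St1.v ⟨0, hp⟩) := fun _ _ h => (St1.v.inj h).2
  obtain ⟨⟨I, hI, rfl⟩, hmax⟩ := hα
  refine ⟨⟨_, ?_, St1.isSyncSet_image_of_pairwise G hp hI, by
    rw [Set.ncard_image_of_injective _ hinj, Set.ncard_coe_finset]⟩, ?_⟩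
  · rintro _ ⟨j, -, rfl⟩
    exact ⟨j, rfl⟩
  rintro _ ⟨S, hS, hsync, rfl⟩
  obtain ⟨J, rfl⟩ := Set.subset_range_iff_exists_image_eq.mp fun q hq =>
    (hS hq).imp fun _ => Eq.symm
  refine hmax ⟨J.toFinite.toFinset, by simpa using St1.pairwise_not_adj_of_isSyncSet G hp hsync, ?_⟩
  rw [Set.ncard_image_of_injective _ hinj, Set.ncard_eq_toFinset_card]

/-- The maximum size of a synchronizing set consisting of first-layer states
of A₁ equals the independence number α(G). -/
theorem stmt_13 {p : ℕ} (G : SimpleGraph (Fin p)) [DecidableRel G.Adj]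
    (hp : 0 < p) (α : ℕ)
    (hα : IsGreatest {k | ∃ I : Finset (Fin p),
      (I : Set (Fin p)).Pairwise (fun a b => ¬ G.Adj a b) ∧ I.card = k} α)
    (hα1 : 1 ≤ α) :
    IsGreatest {k | ∃ S : Set (St1 p),
      S ⊆ {q | ∃ j : Fin p, q = St1.v ⟨0, hp⟩ j} ∧
      IsSyncSet (delta1 G) S ∧ S.ncard = k} α :=
  stmt_13_general G hp α hα
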